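/- In the above setup, for every λ ∈ ℝ^d and every t ∈ ℕ, writing λ̄^t := (1/H)Σ_{i=1}^H λ_i^t and Δ^t := H‖λ̄^{t+1} − λ‖² − H‖λ̄^t − λ‖², it holds that ((1 − βθ)/(2β))·Δ^t ≤ (H/M)·Σ_{i=1}^H ⟨λ̄^t, g_i^t⟩ − (H/M)·Σ_{i=1}^H ⟨λ, g_i^t⟩ + (θH/2)·‖λ‖² + H³ψ²β/M² + ψ²Hβ + (1 + 1/ε³)·(4ρH + χ)·(8H³ψ²)/(M²θ), where ε := 1 − κ − 8√(ρH) and χ := (1/H)·‖Eᵀ𝟙 − 𝟙‖². -/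

import Mathlib

/-!
Write `λ̄ᵗ⁺¹ = (1 - βθ) λ̄ᵗ + β Gᵗ + rᵗ` with `Gᵗ = (1/M) ∑ᵢ gᵢᵗ` and `rᵗ = λ̄ᵗ⁺¹ - λ̄ᵗ⁺¹ᐟ²`.
Property 2 keeps every `‖λᵢᵗ‖` below `Hψ/(Mθ)`; with that, an exact identity for
`‖(1 - βθ) λ̄ᵗ + β Gᵗ - λ‖²` gives the descent inequality up to `O(βψ²)` plus a multiple of
`‖rᵗ‖²`. The drift `rᵗ` is controlled by the consensus deviation of the half-step: by
Property 1 the squared aggregation errors sum to at most `ρH` times its square, and a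
row-stochastic `E` moves the average only through the defects `χ` of its column sums. Each round
the deviation is contracted by `√κ + √(ρH) ≤ 1 - ε/2` and increased by at most `β (H/M) √H ψ`,
so it stays below `(2/ε) β (H/M) √H ψ`.
-/

open scoped RealInnerProductSpace
open Finset

namespace ByzantineDual

variable {F : Type*} [NormedAddCommGroup F] [InnerProductSpace ℝ F] {n : ℕ}

lemma sum_mul_norm_sub_sq_eq (w : Fin n → ℝ) (hw : ∑ j, w j = 1) (y : Fin n → F) (c : F) :
    ∑ j, w j * ‖y j - c‖ ^ 2
      = ∑ j, w j * ‖y j - ∑ k, w k • y k‖ ^ 2 + ‖∑ k, w k • y k - c‖ ^ 2 := by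
  set m := ∑ k, w k • y k
  have hcross : ∑ j, w j * ⟪y j - m, m - c⟫ = 0 := by
    simp_rw [← real_inner_smul_left, ← sum_inner, smul_sub, sum_sub_distrib, ← sum_smul, hw,
      one_smul, m, sub_self, inner_zero_left]
  calc ∑ j, w j * ‖y j - c‖ ^ 2
      = ∑ j, w j * (‖y j - m‖ ^ 2 + 2 * ⟪y j - m, m - c⟫ + ‖m - c‖ ^ 2) := by
        simp_rw [← norm_add_sq_real, sub_add_sub_cancel]
    _ = _ := by
        simp only [mul_add, sum_add_distrib, ← sum_mul, hw, mul_left_comm _ (2 : ℝ), ← mul_sum,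
          hcross]
        ring

lemma sum_mul_norm_sub_sum_smul_sq_le (w : Fin n → ℝ) (hw : ∑ j, w j = 1)
    (y : Fin n → F) (c : F) :
    ∑ j, w j * ‖y j - ∑ k, w k • y k‖ ^ 2 ≤ ∑ j, w j * ‖y j - c‖ ^ 2 := by
  rw [sum_mul_norm_sub_sq_eq w hw y c]
  exact le_add_of_nonneg_right (sq_nonneg _)

noncomputable def average (x : Fin n → F) : F := (n : ℝ)⁻¹ • ∑ i, x i

lemma average_smul_add_smul (a b : ℝ) (x y : Fin n → F) :
    average (fun i => a • x i + b • y i) = a • average x + b • average y := by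
  simp only [average, sum_add_distrib, ← smul_sum, smul_add, smul_comm a, smul_comm b]

lemma norm_average_le (hn : n ≠ 0) {x : Fin n → F} {B : ℝ} (hx : ∀ i, ‖x i‖ ≤ B) :
    ‖average x‖ ≤ B := by
  have hn' : (0 : ℝ) < n := by positivity
  rw [average, norm_smul, Real.norm_of_nonneg (by positivity), inv_mul_le_iff₀ hn']
  exact (norm_sum_le _ _).trans ((sum_le_sum fun i _ => hx i).trans_eq (by simp))

noncomputable def deviation : (Fin n → F) →ₗ[ℝ] PiLp 2 (fun _ : Fin n => F) where
  toFun x := WithLp.toLp 2 fun i => x i - average x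
  map_add' x y := by
    ext i
    simp only [average, Pi.add_apply, sum_add_distrib, smul_add, PiLp.add_apply]
    abel
  map_smul' c x := by
    ext i
    simp only [average, Pi.smul_apply, ← smul_sum, smul_comm c, PiLp.smul_apply, smul_sub,
      RingHom.id_apply]

@[simp]
lemma deviation_apply (x : Fin n → F) (i : Fin n) : deviation x i = x i - average x := rfl

lemma norm_sq_deviation (x : Fin n → F) :
    ‖deviation x‖ ^ 2 = ∑ i, ‖x i - average x‖ ^ 2 := by
  simp [PiLp.norm_sq_eq_of_L2]

lemma norm_sq_deviation_le (x : Fin n → F) : ‖deviation x‖ ^ 2 ≤ ∑ i, ‖x i‖ ^ 2 := by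
  rcases eq_or_ne n 0 with rfl | hn
  · simp [norm_sq_deviation]
  have hn' : (0 : ℝ) < (n : ℝ)⁻¹ := by positivity
  have h := sum_mul_norm_sub_sum_smul_sq_le (fun _ => (n : ℝ)⁻¹) (by simp [hn]) x 0
  simp only [← mul_sum, ← smul_sum, sub_zero] at h
  rw [norm_sq_deviation]
  exact le_of_mul_le_mul_left h hn'

lemma norm_sum_smul_sq_le (c : Fin n → ℝ) (x : Fin n → F) :
    ‖∑ j, c j • x j‖ ^ 2 ≤ (∑ j, c j ^ 2) * ∑ j, ‖x j‖ ^ 2 := by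
  have h : ‖∑ j, c j • x j‖ ≤ ∑ j, |c j| * ‖x j‖ :=
    (norm_sum_le _ _).trans_eq (by simp_rw [norm_smul, Real.norm_eq_abs])
  calc ‖∑ j, c j • x j‖ ^ 2 ≤ (∑ j, |c j| * ‖x j‖) ^ 2 := by gcongr
    _ ≤ (∑ j, |c j| ^ 2) * ∑ j, ‖x j‖ ^ 2 := sum_mul_sq_le_sq_mul_sq _ _ _
    _ = _ := by simp_rw [sq_abs]

lemma sum_norm_sum_smul_sq_le {ι : Type*} [Fintype ι] (A : Matrix (Fin n) (Fin n) ℝ)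
    (y : Fin n → EuclideanSpace ℝ ι) :
    ∑ i, ‖∑ j, A i j • y j‖ ^ 2
      ≤ ‖LinearMap.toContinuousLinearMap (Matrix.toEuclideanLin A)‖ ^ 2 * ∑ j, ‖y j‖ ^ 2 := by
  set T := LinearMap.toContinuousLinearMap (Matrix.toEuclideanLin A)
  have hcoord (k : ι) : ∑ i, (∑ j, A i j * y j k) ^ 2 ≤ ‖T‖ ^ 2 * ∑ j, y j k ^ 2 := by
    have h := pow_le_pow_left₀ (norm_nonneg _) (T.le_opNorm (WithLp.toLp 2 fun j => y j k)) 2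
    simpa [T, mul_pow, EuclideanSpace.real_norm_sq_eq, Matrix.mulVec, dotProduct] using h
  calc ∑ i, ‖∑ j, A i j • y j‖ ^ 2 = ∑ k, ∑ i, (∑ j, A i j * y j k) ^ 2 := by
        simp [EuclideanSpace.real_norm_sq_eq, sum_comm (γ := ι)]
    _ ≤ ∑ k, ‖T‖ ^ 2 * ∑ j, y j k ^ 2 := sum_le_sum fun k _ => hcoord k
    _ = _ := by simp [← mul_sum, EuclideanSpace.real_norm_sq_eq, sum_comm (γ := ι)]

noncomputable def subMeanRow (e : Matrix (Fin n) (Fin n) ℝ) : Matrix (Fin n) (Fin n) ℝ :=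
  e - Matrix.of fun _ j => (n : ℝ)⁻¹ * ∑ k, e k j

/-- `√κ` in the paper. -/
noncomputable def mixingContraction (e : Matrix (Fin n) (Fin n) ℝ) : ℝ :=
  ‖LinearMap.toContinuousLinearMap (Matrix.toEuclideanLin (subMeanRow e))‖

/-- `χ` in the paper. -/
noncomputable def columnSumDefect (e : Matrix (Fin n) (Fin n) ℝ) : ℝ :=
  (n : ℝ)⁻¹ * ∑ j, (∑ i, e i j - 1) ^ 2

section Mixing

variable {e : Matrix (Fin n) (Fin n) ℝ}

lemma sum_sum_smul_eq_sum_colSum_smul (y : Fin n → F) :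
    ∑ i, ∑ j, e i j • y j = ∑ j, (∑ i, e i j) • y j := by
  rw [sum_comm]
  simp_rw [sum_smul]

lemma sum_colSum_eq (he1 : ∀ i, ∑ j, e i j = 1) : ∑ j, ∑ i, e i j = n := by
  rw [sum_comm]
  simp [he1]

lemma sum_norm_sq_aggregation_error_le (he : ∀ i j, 0 ≤ e i j) (he1 : ∀ i, ∑ j, e i j = 1)
    {ρ : ℝ} (hρ : 0 ≤ ρ) {y z : Fin n → F}
    (hz : ∀ i, ‖z i - ∑ j, e i j • y j‖ ^ 2
      ≤ ρ * ∑ j, e i j * ‖y j - ∑ k, e i k • y k‖ ^ 2) :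
    ∑ i, ‖z i - ∑ j, e i j • y j‖ ^ 2 ≤ ρ * n * ‖deviation y‖ ^ 2 := by
  have he_le (i j : Fin n) : e i j ≤ 1 :=
    (single_le_sum (fun k _ => he i k) (mem_univ j)).trans_eq (he1 i)
  calc ∑ i, ‖z i - ∑ j, e i j • y j‖ ^ 2
      ≤ ∑ i, ρ * ∑ j, e i j * ‖y j - average y‖ ^ 2 := by
        refine sum_le_sum fun i _ => (hz i).trans ?_
        exact mul_le_mul_of_nonneg_left (sum_mul_norm_sub_sum_smul_sq_le _ (he1 i) y _) hρ
    _ ≤ ∑ _i : Fin n, ρ * ∑ j, ‖y j - average y‖ ^ 2 := by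
        gcongr with i _ j
        exact mul_le_of_le_one_left (sq_nonneg _) (he_le i j)
    _ = ρ * n * ‖deviation y‖ ^ 2 := by
        simp only [sum_const, card_univ, Fintype.card_fin, nsmul_eq_mul, norm_sq_deviation]; ring

lemma deviation_sum_smul (he1 : ∀ i, ∑ j, e i j = 1) (y : Fin n → F) (i : Fin n) :
    deviation (fun i => ∑ j, e i j • y j) i
      = ∑ j, subMeanRow e i j • deviation y j := by
  have hn : (n : ℝ) ≠ 0 := Nat.cast_ne_zero.mpr (Fin.pos i).ne'
  simp only [deviation_apply, subMeanRow, Matrix.sub_apply, Matrix.of_apply, sub_smul, smul_sub,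
    sum_sub_distrib, ← sum_smul, he1, mul_smul, ← smul_sum, sum_colSum_eq he1]
  simp [average, sum_sum_smul_eq_sum_colSum_smul, hn]

lemma norm_deviation_sum_smul_le {ι : Type*} [Fintype ι] (he1 : ∀ i, ∑ j, e i j = 1)
    (y : Fin n → EuclideanSpace ℝ ι) :
    ‖deviation (fun i => ∑ j, e i j • y j)‖ ≤ mixingContraction e * ‖deviation y‖ := by
  refine (pow_le_pow_iff_left₀ (norm_nonneg _) (by unfold mixingContraction; positivity)
    two_ne_zero).mp ?_
  calc ‖deviation (fun i => ∑ j, e i j • y j)‖ ^ 2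
      = ∑ i, ‖∑ j, subMeanRow e i j • deviation y j‖ ^ 2 := by
        simp only [PiLp.norm_sq_eq_of_L2, deviation_sum_smul he1]
    _ ≤ mixingContraction e ^ 2 * ∑ j, ‖deviation y j‖ ^ 2 := sum_norm_sum_smul_sq_le _ _
    _ = (mixingContraction e * ‖deviation y‖) ^ 2 := by rw [mul_pow, PiLp.norm_sq_eq_of_L2]

lemma norm_deviation_le_of_aggregation (he : ∀ i j, 0 ≤ e i j) (he1 : ∀ i, ∑ j, e i j = 1)
    {ρ : ℝ} (hρ : 0 ≤ ρ) {ι : Type*} [Fintype ι] {y z : Fin n → EuclideanSpace ℝ ι}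
    (hz : ∀ i, ‖z i - ∑ j, e i j • y j‖ ^ 2
      ≤ ρ * ∑ j, e i j * ‖y j - ∑ k, e i k • y k‖ ^ 2) :
    ‖deviation z‖ ≤ (mixingContraction e + √(ρ * n)) * ‖deviation y‖ := by
  have herr : ‖deviation (fun i => z i - ∑ j, e i j • y j)‖ ≤ √(ρ * n) * ‖deviation y‖ := by
    refine (pow_le_pow_iff_left₀ (norm_nonneg _) (by positivity) two_ne_zero).mp ?_
    rw [mul_pow, Real.sq_sqrt (by positivity)]
    exact (norm_sq_deviation_le _).trans (sum_norm_sq_aggregation_error_le he he1 hρ hz)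
  have hsplit : z = (fun i => ∑ j, e i j • y j) + fun i => z i - ∑ j, e i j • y j := by
    ext1 i; simp
  rw [hsplit, map_add, add_mul]
  exact (norm_add_le _ _).trans (add_le_add (norm_deviation_sum_smul_le he1 y) herr)

lemma average_sub_average_eq (he1 : ∀ i, ∑ j, e i j = 1) (y z : Fin n → F) :
    average z - average y = (n : ℝ)⁻¹ • ∑ i, (z i - ∑ j, e i j • y j)
      + (n : ℝ)⁻¹ • ∑ j, (∑ i, e i j - 1) • deviation y j := by
  have hzero : ∑ j, (∑ i, e i j - 1) = 0 := by simp [sum_sub_distrib, sum_colSum_eq he1]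
  have hcol : ∑ j, (∑ i, e i j - 1) • deviation y j = ∑ j, (∑ i, e i j) • y j - ∑ j, y j := by
    simp only [deviation_apply, smul_sub, sum_sub_distrib]
    rw [← sum_smul, hzero, zero_smul, sub_zero]
    simp only [sub_smul, one_smul, sum_sub_distrib]
  rw [hcol, ← sum_sum_smul_eq_sum_colSum_smul, sum_sub_distrib, average, average, smul_sub,
    smul_sub]
  abel

lemma sq_norm_average_sub_average_le (he : ∀ i j, 0 ≤ e i j) (he1 : ∀ i, ∑ j, e i j = 1)
    {ρ : ℝ} (hρ : 0 ≤ ρ) {y z : Fin n → F}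
    (hz : ∀ i, ‖z i - ∑ j, e i j • y j‖ ^ 2
      ≤ ρ * ∑ j, e i j * ‖y j - ∑ k, e i k • y k‖ ^ 2) :
    ‖average z - average y‖ ^ 2 ≤ 2 * (ρ + columnSumDefect e / n) * ‖deviation y‖ ^ 2 := by
  rcases eq_or_ne n 0 with rfl | hn
  · simp only [average, Nat.cast_zero, inv_zero, zero_smul, sub_self, norm_zero, div_zero, add_zero,
      ne_eq, OfNat.ofNat_ne_zero, not_false_eq_true, zero_pow]
    positivity
  have hn' : (0 : ℝ) < n := by positivity
  have herr : ‖(n : ℝ)⁻¹ • ∑ i, (z i - ∑ j, e i j • y j)‖ ^ 2 ≤ ρ * ‖deviation y‖ ^ 2 := by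
    have h := norm_sum_smul_sq_le (fun _ => (1 : ℝ)) fun i => z i - ∑ j, e i j • y j
    simp only [one_smul, one_pow, sum_const, card_univ, Fintype.card_fin, nsmul_eq_mul,
      mul_one] at h
    calc _ = (n : ℝ)⁻¹ ^ 2 * ‖∑ i, (z i - ∑ j, e i j • y j)‖ ^ 2 := by
          rw [norm_smul, mul_pow, Real.norm_of_nonneg (by positivity)]
      _ ≤ (n : ℝ)⁻¹ ^ 2 * (n * (ρ * n * ‖deviation y‖ ^ 2)) := by
          gcongr
          exact h.trans (by gcongr; exact sum_norm_sq_aggregation_error_le he he1 hρ hz)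
      _ = ρ * ‖deviation y‖ ^ 2 := by field_simp
  have hcol : ‖(n : ℝ)⁻¹ • ∑ j, (∑ i, e i j - 1) • deviation y j‖ ^ 2
      ≤ columnSumDefect e / n * ‖deviation y‖ ^ 2 := by
    calc _ = (n : ℝ)⁻¹ ^ 2 * ‖∑ j, (∑ i, e i j - 1) • deviation y j‖ ^ 2 := by
          rw [norm_smul, mul_pow, Real.norm_of_nonneg (by positivity)]
      _ ≤ (n : ℝ)⁻¹ ^ 2 * ((∑ j, (∑ i, e i j - 1) ^ 2) * ‖deviation y‖ ^ 2) := by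
          rw [PiLp.norm_sq_eq_of_L2 _ (deviation y)]
          gcongr
          exact norm_sum_smul_sq_le _ _
      _ = _ := by rw [columnSumDefect]; ring
  rw [average_sub_average_eq he1]
  calc _ ≤ (‖(n : ℝ)⁻¹ • ∑ i, (z i - ∑ j, e i j • y j)‖
        + ‖(n : ℝ)⁻¹ • ∑ j, (∑ i, e i j - 1) • deviation y j‖) ^ 2 := by
        gcongr; exact norm_add_le _ _
    _ ≤ _ := add_sq_le.trans (by linarith)

end Mixing

lemma descent_identity (β θ : ℝ) (a G l : F) :
    (1 - β * θ) * (‖(1 - β * θ) • a + β • G - l‖ ^ 2 - ‖a - l‖ ^ 2)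
      = 2 * β * ⟪a - l, G⟫
        + β * θ * (‖l‖ ^ 2 - ‖(1 - β * θ) • a + β • G - l‖ ^ 2 - (1 - β * θ) * ‖a‖ ^ 2)
        + β ^ 2 * ‖G‖ ^ 2 - 2 * β ^ 2 * θ * ⟪a, G⟫ := by
  simp only [← real_inner_self_eq_norm_sq, inner_add_left, inner_add_right, inner_sub_left,
    inner_sub_right, real_inner_smul_left, real_inner_smul_right, real_inner_comm a G,
    real_inner_comm a l, real_inner_comm G l]
  ring

lemma one_step_descent {β θ ψ : ℝ} (hβ : 0 < β) (hθ : 0 < θ) (hβθ : β * θ ≤ 1) {a G : F}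
    (ha : θ * ‖a‖ ≤ ψ) (hG : ‖G‖ ≤ ψ) (r l : F) :
    (1 - β * θ) / (2 * β) * (‖(1 - β * θ) • a + β • G + r - l‖ ^ 2 - ‖a - l‖ ^ 2)
      ≤ ⟪a - l, G⟫ + θ / 2 * ‖l‖ ^ 2 + 3 / 2 * β * ψ ^ 2 + ‖r‖ ^ 2 / (2 * β ^ 2 * θ) := by
  set q := 1 - β * θ
  set P := q • a + β • G - l
  set R := ‖r‖ ^ 2 / (β * θ) with hR_def
  have hq : 0 ≤ q := sub_nonneg.mpr hβθ
  have hs : 0 < β * θ := mul_pos hβ hθ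
  have hψ : 0 ≤ ψ := (by positivity : 0 ≤ θ * ‖a‖).trans ha
  have hR : ‖r‖ ^ 2 = β * θ * R := by rw [hR_def]; field_simp
  have hPr : ‖q • a + β • G + r - l‖ ^ 2 = ‖P‖ ^ 2 + 2 * ⟪P, r⟫ + ‖r‖ ^ 2 := by
    rw [add_sub_right_comm, norm_add_sq_real]
  -- the `-βθ‖P‖²` of `descent_identity` absorbs the cross term with `r`
  have hcross : 2 * q * ⟪P, r⟫ ≤ β * θ * ‖P‖ ^ 2 + q ^ 2 * R := by
    have hamgm : 2 * q * (‖P‖ * ‖r‖) ≤ β * θ * ‖P‖ ^ 2 + q ^ 2 * R :=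
      le_of_mul_le_mul_left (by nlinarith [sq_nonneg (β * θ * ‖P‖ - q * ‖r‖)]) hs
    nlinarith [mul_le_mul_of_nonneg_left (real_inner_le_norm P r) (by positivity : 0 ≤ 2 * q)]
  have hG_sq : ‖G‖ ^ 2 ≤ ψ ^ 2 := pow_le_pow_left₀ (norm_nonneg _) hG 2
  have haG : -⟪a, G⟫ * θ ≤ ψ * ψ := by
    nlinarith [neg_le_abs ⟪a, G⟫, abs_real_inner_le_norm a G,
      mul_le_mul ha hG (norm_nonneg _) hψ]
  have hR_div : ‖r‖ ^ 2 / (2 * β ^ 2 * θ) * (2 * β) = R := by rw [hR_def]; field_simp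
  rw [div_mul_eq_mul_div, div_le_iff₀ (by positivity), hPr]
  nlinarith [descent_identity β θ a G l, mul_nonneg hs.le (mul_nonneg hq (sq_nonneg ‖a‖)),
    mul_le_of_le_one_left (by positivity : 0 ≤ R) (by linarith : q ≤ 1),
    mul_le_mul_of_nonneg_left haG (by positivity : 0 ≤ 2 * β ^ 2),
    mul_le_mul_of_nonneg_left hG_sq (sq_nonneg β)]

lemma norm_le_of_norm_succ_le_sSup {ι : Type*} {x y g : ι → ℕ → F} {P : ι → ι → Prop}
    {a b ψ : ℝ} (ha0 : 0 ≤ a) (ha1 : a < 1) (hb : 0 ≤ b) (hψ : 0 ≤ ψ)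
    (hx0 : ∀ i, x i 0 = 0) (hy : ∀ i t, y i t = a • x i t + b • g i t)
    (hg : ∀ i t, ‖g i t‖ ≤ ψ)
    (hx : ∀ i t, ‖x i (t + 1)‖ ≤ sSup {r : ℝ | ∃ j, P i j ∧ r = ‖y j t‖}) (t : ℕ) (i : ι) :
    ‖x i t‖ ≤ b * ψ / (1 - a) := by
  have hB : 0 ≤ b * ψ / (1 - a) := div_nonneg (mul_nonneg hb hψ) (sub_nonneg.mpr ha1.le)
  have hy_le (t : ℕ) (hxt : ∀ i, ‖x i t‖ ≤ b * ψ / (1 - a)) (j : ι) :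
      ‖y j t‖ ≤ b * ψ / (1 - a) := by
    calc ‖y j t‖ ≤ a * ‖x j t‖ + b * ‖g j t‖ := by
          rw [hy]
          refine (norm_add_le _ _).trans_eq ?_
          rw [norm_smul, norm_smul, Real.norm_of_nonneg ha0, Real.norm_of_nonneg hb]
      _ ≤ a * (b * ψ / (1 - a)) + b * ψ := by gcongr; exacts [hxt j, hg j t]
      _ = b * ψ / (1 - a) := by field_simp [(sub_pos.mpr ha1).ne']; ring
  induction t generalizing i with
  | zero => simpa [hx0] using hB
  | succ t ih =>
    refine (hx i t).trans (Real.sSup_le ?_ hB)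
    rintro r ⟨j, -, rfl⟩
    exact hy_le t ih j

lemma le_div_one_sub_of_contraction {u v : ℕ → ℝ} {γ X : ℝ} (hγ0 : 0 ≤ γ) (hγ1 : γ < 1)
    (hX : 0 ≤ X) (hu0 : u 0 = 0) (hv : ∀ t, v t ≤ u t + X) (hu : ∀ t, u (t + 1) ≤ γ * v t)
    (t : ℕ) : v t ≤ X / (1 - γ) := by
  have h1γ : 0 < 1 - γ := sub_pos.mpr hγ1
  have hu_le (t : ℕ) : u t ≤ γ * X / (1 - γ) := by
    induction t with
    | zero => rw [hu0]; positivity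
    | succ t ih =>
      calc u (t + 1) ≤ γ * (γ * X / (1 - γ) + X) := by
            refine (hu t).trans (mul_le_mul_of_nonneg_left ?_ hγ0)
            linarith [hv t]
        _ = γ * X / (1 - γ) := by field_simp; ring
  calc v t ≤ γ * X / (1 - γ) + X := by linarith [hv t, hu_le t]
    _ = X / (1 - γ) := by field_simp; ring

theorem sq_norm_average_drift_le {ι : Type*} [Fintype ι] {e : Matrix (Fin n) (Fin n) ℝ}
    (he : ∀ i j, 0 ≤ e i j) (he1 : ∀ i, ∑ j, e i j = 1) {ρ a b ψ ε : ℝ} (hρ : 0 ≤ ρ)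
    (ha0 : 0 ≤ a) (ha1 : a ≤ 1) (hb : 0 ≤ b) (hψ : 0 ≤ ψ) (hε : 0 < ε)
    (hγ : mixingContraction e + √(ρ * n) ≤ 1 - ε / 2)
    {x y g : Fin n → ℕ → EuclideanSpace ℝ ι} (hx0 : ∀ i, x i 0 = 0)
    (hy : ∀ i t, y i t = a • x i t + b • g i t) (hg : ∀ i t, ‖g i t‖ ≤ ψ)
    (hx : ∀ i t, ‖x i (t + 1) - ∑ j, e i j • y j t‖ ^ 2
      ≤ ρ * ∑ j, e i j * ‖y j t - ∑ k, e i k • y k t‖ ^ 2) (t : ℕ) :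
    ‖average (fun i => x i (t + 1)) - average (fun i => y i t)‖ ^ 2
      ≤ 8 * (ρ * n + columnSumDefect e) * (b * ψ / ε) ^ 2 := by
  set γ := mixingContraction e + √(ρ * n)
  set X := b * (√n * ψ)
  have hγ0 : 0 ≤ γ := by unfold γ mixingContraction; positivity
  have hdev_g (s : ℕ) : ‖deviation (fun i => g i s)‖ ≤ √n * ψ := by
    refine (pow_le_pow_iff_left₀ (norm_nonneg _) (by positivity) two_ne_zero).mp ?_
    calc ‖deviation (fun i => g i s)‖ ^ 2 ≤ ∑ i, ‖g i s‖ ^ 2 := norm_sq_deviation_le _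
      _ ≤ ∑ _i : Fin n, ψ ^ 2 := by gcongr with i; exact hg i s
      _ = (√n * ψ) ^ 2 := by simp [mul_pow]
  have hv (s : ℕ) : ‖deviation (fun i => y i s)‖ ≤ ‖deviation (fun i => x i s)‖ + X := by
    have hys : (fun i => y i s) = a • (fun i => x i s) + b • fun i => g i s := funext (hy · s)
    rw [hys, map_add, map_smul, map_smul]
    refine (norm_add_le _ _).trans ?_
    rw [norm_smul, norm_smul, Real.norm_of_nonneg ha0, Real.norm_of_nonneg hb]
    gcongr
    · exact mul_le_of_le_one_left (norm_nonneg _) ha1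
    · exact mul_le_mul_of_nonneg_left (hdev_g s) hb
  have hu0 : ‖deviation (fun i => x i 0)‖ = 0 := by
    rw [show (fun i => x i 0) = 0 from funext hx0, map_zero, norm_zero]
  have hdev_y : ‖deviation (fun i => y i t)‖ ≤ 2 * X / ε := by
    calc ‖deviation (fun i => y i t)‖ ≤ X / (1 - γ) :=
          le_div_one_sub_of_contraction hγ0 (by linarith) (by positivity) hu0 hv
            (fun s => norm_deviation_le_of_aggregation he he1 hρ (hx · s)) t
      _ ≤ X / (ε / 2) := div_le_div_of_nonneg_left (by positivity) (by positivity) (by linarith)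
      _ = 2 * X / ε := by field_simp
  rcases eq_or_ne n 0 with rfl | hn
  · simp [average, columnSumDefect]
  have hX : X ^ 2 = n * (b * ψ) ^ 2 := by
    rw [mul_pow, mul_pow, Real.sq_sqrt (Nat.cast_nonneg n)]; ring
  calc _ ≤ 2 * (ρ + columnSumDefect e / n) * ‖deviation (fun i => y i t)‖ ^ 2 :=
        sq_norm_average_sub_average_le he he1 hρ (hx · t)
    _ ≤ 2 * (ρ + columnSumDefect e / n) * (2 * X / ε) ^ 2 := by
        have : 0 ≤ columnSumDefect e := by unfold columnSumDefect; positivity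
        gcongr
    _ = 8 * (ρ * n + columnSumDefect e) * (b * ψ / ε) ^ 2 := by
        rw [div_pow, div_pow, mul_pow, hX]; field_simp; ring

theorem average_descent {ι : Type*} [Fintype ι] {e : Matrix (Fin n) (Fin n) ℝ} (hn : n ≠ 0)
    (he : ∀ i j, 0 ≤ e i j) (he1 : ∀ i, ∑ j, e i j = 1) {ρ β θ c ψ ε : ℝ} (hρ : 0 ≤ ρ)
    (hβ : 0 < β) (hθ : 0 < θ) (hβθ : β * θ < 1) (hc : 0 ≤ c) (hψ : 0 ≤ ψ) (hε : 0 < ε)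
    (hγ : mixingContraction e + √(ρ * n) ≤ 1 - ε / 2)
    {x y g : Fin n → ℕ → EuclideanSpace ℝ ι} (hx0 : ∀ i, x i 0 = 0)
    (hy : ∀ i t, y i t = (1 - β * θ) • x i t + (β * c) • g i t) (hg : ∀ i t, ‖g i t‖ ≤ ψ)
    (hx₁ : ∀ i t, ‖x i (t + 1) - ∑ j, e i j • y j t‖ ^ 2
      ≤ ρ * ∑ j, e i j * ‖y j t - ∑ k, e i k • y k t‖ ^ 2)
    (hx₂ : ∀ i t, ‖x i (t + 1)‖ ≤ sSup {r : ℝ | ∃ j, 0 < e i j ∧ r = ‖y j t‖})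
    (l : EuclideanSpace ℝ ι) (t : ℕ) :
    (1 - β * θ) / (2 * β)
        * (‖average (fun i => x i (t + 1)) - l‖ ^ 2 - ‖average (fun i => x i t) - l‖ ^ 2)
      ≤ ⟪average (fun i => x i t) - l, c • average fun i => g i t⟫ + θ / 2 * ‖l‖ ^ 2
        + 3 / 2 * β * (c * ψ) ^ 2 + 4 * (ρ * n + columnSumDefect e) * (c * ψ / ε) ^ 2 / θ := by
  have hq : 0 ≤ 1 - β * θ := by linarith
  have hq1 : 1 - β * θ < 1 := by linarith [mul_pos hβ hθ]
  have ha : θ * ‖average fun i => x i t‖ ≤ c * ψ := by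
    have hx (i : Fin n) : ‖x i t‖ ≤ β * c * ψ / (1 - (1 - β * θ)) :=
      norm_le_of_norm_succ_le_sSup hq hq1 (by positivity) hψ hx0 hy hg hx₂ t i
    calc θ * ‖average fun i => x i t‖ ≤ θ * (β * c * ψ / (1 - (1 - β * θ))) := by
          gcongr; exact norm_average_le hn hx
      _ = c * ψ := by rw [sub_sub_cancel]; field_simp
  have hG : ‖c • average fun i => g i t‖ ≤ c * ψ := by
    rw [norm_smul, Real.norm_of_nonneg hc]
    exact mul_le_mul_of_nonneg_left (norm_average_le hn (hg · t)) hc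
  have hhalf : average (fun i => y i t)
      = (1 - β * θ) • average (fun i => x i t) + β • c • average fun i => g i t := by
    simp only [hy, average_smul_add_smul, smul_smul]
  have hdesc := one_step_descent hβ hθ hβθ.le ha hG
    (average (fun i => x i (t + 1)) - average fun i => y i t) l
  rw [← hhalf, add_sub_cancel] at hdesc
  have hdrift := sq_norm_average_drift_le he he1 hρ hq hq1.le (by positivity) hψ hε hγ hx0 hy hg
    hx₁ t
  refine hdesc.trans (add_le_add le_rfl ?_)
  calc _ ≤ 8 * (ρ * n + columnSumDefect e) * (β * c * ψ / ε) ^ 2 / (2 * β ^ 2 * θ) := by gcongr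
    _ = _ := by field_simp; ring

lemma descent_error_terms_le {H M β θ ψ ρ χ ε : ℝ} (hH : 0 < H) (hHM : H ≤ M) (hβ : 0 < β)
    (hθ : 0 < θ) (hρ : 0 ≤ ρ) (hχ : 0 ≤ χ) (hε0 : 0 < ε) (hε1 : ε ≤ 1) :
    H * (3 / 2 * β * (H / M * ψ) ^ 2) + H * (4 * (ρ * H + χ) * (H / M * ψ / ε) ^ 2 / θ)
      ≤ H ^ 3 * ψ ^ 2 * β / M ^ 2 + ψ ^ 2 * H * β
        + (1 + 1 / ε ^ 3) * (4 * ρ * H + χ) * (8 * H ^ 3 * ψ ^ 2) / (M ^ 2 * θ) := by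
  have hM : 0 < M := hH.trans_le hHM
  have hgrad : H * (3 / 2 * β * (H / M * ψ) ^ 2) ≤ H ^ 3 * ψ ^ 2 * β / M ^ 2 + ψ ^ 2 * H * β := by
    have hHM2 : (H / M) ^ 2 / 2 ≤ 1 := by
      have := pow_le_one₀ (div_nonneg hH.le hM.le) ((div_le_one hM).mpr hHM) (n := 2)
      linarith
    calc H * (3 / 2 * β * (H / M * ψ) ^ 2)
        = H ^ 3 * ψ ^ 2 * β / M ^ 2 + ψ ^ 2 * H * β * ((H / M) ^ 2 / 2) := by field_simp; ring
      _ ≤ _ := by linarith [mul_le_of_le_one_right (by positivity : 0 ≤ ψ ^ 2 * H * β) hHM2]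
  have hε : 1 / ε ^ 2 ≤ 1 + 1 / ε ^ 3 := by
    have := one_div_le_one_div_of_le (by positivity) (pow_le_pow_of_le_one hε0.le hε1
      (by norm_num : 2 ≤ 3))
    linarith [one_div_pos.mpr (pow_pos hε0 3)]
  have hdrift : H * (4 * (ρ * H + χ) * (H / M * ψ / ε) ^ 2 / θ)
      ≤ (1 + 1 / ε ^ 3) * (4 * ρ * H + χ) * (8 * H ^ 3 * ψ ^ 2) / (M ^ 2 * θ) := by
    calc H * (4 * (ρ * H + χ) * (H / M * ψ / ε) ^ 2 / θ)
        = 4 * (ρ * H + χ) * (1 / ε ^ 2) * (H ^ 3 * ψ ^ 2 / (M ^ 2 * θ)) := by field_simp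
      _ ≤ 8 * (4 * ρ * H + χ) * (1 + 1 / ε ^ 3) * (H ^ 3 * ψ ^ 2 / (M ^ 2 * θ)) := by
          gcongr
          · norm_num
          · nlinarith
      _ = _ := by ring
  linarith

end ByzantineDual

open ByzantineDual

theorem byzantine_dual_descent_inequality_general
    (d H M : ℕ) (hH : 1 ≤ H) (hHM : H ≤ M)
    (β θ : ℝ) (hβ : 0 < β) (hθ : 0 < θ)
    (hβθ : β * θ < 1)
    (ψ : ℝ) (hψ : 0 ≤ ψ)
    (Emat : Matrix (Fin H) (Fin H) ℝ)
    (hEnn : ∀ i j, 0 ≤ Emat i j)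
    (hErow : ∀ i, ∑ j, Emat i j = 1)
    (κ : ℝ)
    (hκ : κ = ‖LinearMap.toContinuousLinearMap
        (Matrix.toEuclideanLin
          (Emat - Matrix.of fun _ j => (H : ℝ)⁻¹ * ∑ k, Emat k j))‖ ^ 2)
    (ρ : ℝ) (hρ : 0 ≤ ρ) (hρκ : 8 * Real.sqrt (ρ * H) < 1 - κ)
    (ε : ℝ) (hε : ε = 1 - κ - 8 * Real.sqrt (ρ * H))
    (χ : ℝ) (hχ : χ = (H : ℝ)⁻¹ * ∑ j, (∑ i, Emat i j - 1) ^ 2)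
    (g : Fin H → ℕ → EuclideanSpace ℝ (Fin d))
    (hg : ∀ i t, ‖g i t‖ ≤ ψ)
    (lam lamhalf : Fin H → ℕ → EuclideanSpace ℝ (Fin d))
    (hlam0 : ∀ i, lam i 0 = 0)
    (hlamhalf : ∀ i t,
      lamhalf i t = (1 - β * θ) • lam i t + (β * ((H : ℝ) / M)) • g i t)
    (hProp1 : ∀ i t,
      ‖lam i (t + 1) - ∑ j, Emat i j • lamhalf j t‖ ^ 2
        ≤ ρ * ∑ j, Emat i j
            * ‖lamhalf j t - ∑ k, Emat i k • lamhalf k t‖ ^ 2)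
    (hProp2 : ∀ i t,
      ‖lam i (t + 1)‖
        ≤ sSup {r : ℝ | ∃ j, 0 < Emat i j ∧ r = ‖lamhalf j t‖}) :
    ∀ (lamv : EuclideanSpace ℝ (Fin d)) (t : ℕ),
      ((1 - β * θ) / (2 * β))
          * ((H : ℝ) * ‖(H : ℝ)⁻¹ • (∑ i, lam i (t + 1)) - lamv‖ ^ 2
            - (H : ℝ) * ‖(H : ℝ)⁻¹ • (∑ i, lam i t) - lamv‖ ^ 2)
        ≤ ((H : ℝ) / M) * ∑ i, ⟪(H : ℝ)⁻¹ • ∑ j, lam j t, g i t⟫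
          - ((H : ℝ) / M) * ∑ i, ⟪lamv, g i t⟫
          + (θ * (H : ℝ) / 2) * ‖lamv‖ ^ 2
          + (H : ℝ) ^ 3 * ψ ^ 2 * β / (M : ℝ) ^ 2
          + ψ ^ 2 * (H : ℝ) * β
          + (1 + 1 / ε ^ 3) * (4 * ρ * (H : ℝ) + χ)
              * (8 * (H : ℝ) ^ 3 * ψ ^ 2) / ((M : ℝ) ^ 2 * θ) := by
  intro lamv t
  have hH0 : (0 : ℝ) < H := by exact_mod_cast hH
  have hHM' : (H : ℝ) ≤ M := by exact_mod_cast hHM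
  have hκ' : κ = mixingContraction Emat ^ 2 := hκ
  have hsqrt := Real.sqrt_nonneg (ρ * H)
  have hε0 : 0 < ε := by rw [hε]; linarith
  have hε1 : ε ≤ 1 := by rw [hε, hκ']; nlinarith [sq_nonneg (mixingContraction Emat)]
  have hγ : mixingContraction Emat + √(ρ * H) ≤ 1 - ε / 2 := by
    rw [hε, hκ']; nlinarith [sq_nonneg (mixingContraction Emat - 1)]
  have hdesc := average_descent (by omega) hEnn hErow hρ hβ hθ hβθ
    (by positivity : (0 : ℝ) ≤ H / M) hψ hε0 hγ hlam0 hlamhalf hg hProp1 hProp2 lamv t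
  rw [show columnSumDefect Emat = χ from hχ.symm] at hdesc
  have hinner : (H : ℝ) / M * ∑ i, ⟪average (fun i => lam i t), g i t⟫
      - (H : ℝ) / M * ∑ i, ⟪lamv, g i t⟫
      = H * ⟪average (fun i => lam i t) - lamv, ((H : ℝ) / M) • average fun i => g i t⟫ := by
    simp only [average, inner_smul_right, inner_sub_left, ← inner_sum]
    field_simp
  have hχ0 : 0 ≤ χ := by rw [hχ]; positivity
  have herr := descent_error_terms_le (ψ := ψ) hH0 hHM' hβ hθ hρ hχ0 hε0 hε1
  simp only [average] at hdesc hinner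
  linarith [mul_le_mul_of_nonneg_left hdesc hH0.le]

/-- **Descent-type inequality for the averaged dual iterates of the
Byzantine-resilient Algorithm 2 (Lemma 5).** -/
theorem byzantine_dual_descent_inequality
    (d H M : ℕ) (hH : 1 ≤ H) (hHM : H ≤ M)
    (β θ : ℝ) (hβ : 0 < β) (hθ : 0 < θ)
    (hβθ0 : 0 < β * θ) (hβθ : β * θ < 1)
    (ψ : ℝ) (hψ : 0 ≤ ψ)
    (Emat : Matrix (Fin H) (Fin H) ℝ)
    (hEnn : ∀ i j, 0 ≤ Emat i j)
    (hErow : ∀ i, ∑ j, Emat i j = 1)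
    (κ : ℝ)
    (hκ : κ = ‖LinearMap.toContinuousLinearMap
        (Matrix.toEuclideanLin
          (Emat - Matrix.of fun _ j => (H : ℝ)⁻¹ * ∑ k, Emat k j))‖ ^ 2)
    (ρ : ℝ) (hρ : 0 ≤ ρ) (hρκ : 8 * Real.sqrt (ρ * H) < 1 - κ)
    (ε : ℝ) (hε : ε = 1 - κ - 8 * Real.sqrt (ρ * H))
    (χ : ℝ) (hχ : χ = (H : ℝ)⁻¹ * ∑ j, (∑ i, Emat i j - 1) ^ 2)
    (g : Fin H → ℕ → EuclideanSpace ℝ (Fin d))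
    (hg : ∀ i t, ‖g i t‖ ≤ ψ)
    (lam lamhalf : Fin H → ℕ → EuclideanSpace ℝ (Fin d))
    (hlam0 : ∀ i, lam i 0 = 0)
    (hlamhalf : ∀ i t,
      lamhalf i t = (1 - β * θ) • lam i t + (β * ((H : ℝ) / M)) • g i t)
    (hProp1 : ∀ i t,
      ‖lam i (t + 1) - ∑ j, Emat i j • lamhalf j t‖ ^ 2
        ≤ ρ * ∑ j, Emat i j
            * ‖lamhalf j t - ∑ k, Emat i k • lamhalf k t‖ ^ 2)
    (hProp2 : ∀ i t,
      ‖lam i (t + 1)‖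
        ≤ sSup {r : ℝ | ∃ j, 0 < Emat i j ∧ r = ‖lamhalf j t‖}) :
    ∀ (lamv : EuclideanSpace ℝ (Fin d)) (t : ℕ),
      ((1 - β * θ) / (2 * β))
          * ((H : ℝ) * ‖(H : ℝ)⁻¹ • (∑ i, lam i (t + 1)) - lamv‖ ^ 2
            - (H : ℝ) * ‖(H : ℝ)⁻¹ • (∑ i, lam i t) - lamv‖ ^ 2)
        ≤ ((H : ℝ) / M) * ∑ i, ⟪(H : ℝ)⁻¹ • ∑ j, lam j t, g i t⟫
          - ((H : ℝ) / M) * ∑ i, ⟪lamv, g i t⟫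
          + (θ * (H : ℝ) / 2) * ‖lamv‖ ^ 2
          + (H : ℝ) ^ 3 * ψ ^ 2 * β / (M : ℝ) ^ 2
          + ψ ^ 2 * (H : ℝ) * β
          + (1 + 1 / ε ^ 3) * (4 * ρ * (H : ℝ) + χ)
              * (8 * (H : ℝ) ^ 3 * ψ ^ 2) / ((M : ℝ) ^ 2 * θ) :=
  byzantine_dual_descent_inequality_general d H M hH hHM β θ hβ hθ hβθ ψ hψ Emat hEnn hErow κ hκ ρ
    hρ hρκ ε hε χ hχ g hg lam lamhalf hlam0 hlamhalf hProp1 hProp2
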